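/- Let $x_1,\dots,x_m$ be elements of a field (or of $\mathbb{R}_{>0}$) such that all partial sums $x_{\sigma(1)}+\cdots+x_{\sigma(k)}$ over all permutations $\sigma$ are nonzero. Then $\sum_{\sigma \in S_m} \prod_{k=1}^{m} \big(x_{\sigma(1)}+x_{\sigma(2)}+\cdots+x_{\sigma(k)}\big)^{-1} = \prod_{i=1}^{m} x_i^{-1}$. -/
import Mathlib

open Finset Equiv

theorem aux_tail (F : Type*) [Field F] : ∀ (m : ℕ) (x : Fin m → F),
    (∀ s : Finset (Fin m), s.Nonempty → ∑ i ∈ s, x i ≠ 0) →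
    ∑ σ : Equiv.Perm (Fin m), ∏ k : Fin m, (∑ i ∈ Finset.Ici k, x (σ i))⁻¹
      = ∏ i : Fin m, (x i)⁻¹ := by
  intro m
  induction m with
  | zero => intro x hx; simp
  | succ n IH =>
    intro x hx
    -- every x i is nonzero
    have hx1 : ∀ i, x i ≠ 0 := fun i => by
      simpa using hx {i} ⟨i, Finset.mem_singleton_self i⟩
    have hS : (∑ i, x i) ≠ 0 := hx Finset.univ ⟨0, Finset.mem_univ 0⟩
    have hIci : ∀ (j : Fin n) (σ : Perm (Fin (n+1))),
        (∑ i ∈ Finset.Ici j.succ, x (σ i)) = ∑ i ∈ Finset.Ici j, x (σ i.succ) := by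
      intro j σ
      have hmap : (Finset.Ici j).map (Fin.succEmb n) = Finset.Ici j.succ := by
        ext a
        simp only [Finset.mem_map, Finset.mem_Ici, Fin.succEmb, Function.Embedding.coeFn_mk]
        constructor
        · rintro ⟨b, hb, rfl⟩; exact Fin.succ_le_succ_iff.mpr hb
        · intro ha
          induction a using Fin.cases with
          | zero => exact absurd ha (by simp [Fin.le_def])
          | succ i => exact ⟨i, by simpa [Fin.succ_le_succ_iff] using ha, rfl⟩
      rw [← hmap, Finset.sum_map]
      rfl
    rw [← Equiv.Perm.decomposeFin.symm.sum_comp]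
    rw [Fintype.sum_prod_type]
    have key : ∀ p : Fin (n+1),
        ∑ e : Perm (Fin n), ∏ k : Fin (n+1),
          (∑ i ∈ Finset.Ici k, x (Equiv.Perm.decomposeFin.symm (p, e) i))⁻¹
        = (∑ i, x i)⁻¹ * (x p * ∏ i, (x i)⁻¹) := by
      intro p
      set y : Fin n → F := fun i => x (Equiv.swap 0 p i.succ) with hy
      have hy_sub : ∀ s : Finset (Fin n), s.Nonempty → ∑ i ∈ s, y i ≠ 0 := by
        intro s hs
        have hinj : Function.Injective (fun i : Fin n => Equiv.swap 0 p i.succ) :=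
          fun a b hab => Fin.succ_injective n ((Equiv.swap 0 p).injective hab)
        rw [hy, show (∑ i ∈ s, x (Equiv.swap 0 p i.succ))
            = ∑ j ∈ s.image (fun i => Equiv.swap 0 p i.succ), x j from
          (Finset.sum_image (fun a _ b _ h => hinj h)).symm]
        exact hx _ (hs.image _)
      have hyprod : ∏ i, (y i)⁻¹ = x p * ∏ i, (x i)⁻¹ := by
        have h1 : (∏ j : Fin (n+1), x (Equiv.swap 0 p j)) = ∏ j, x j :=
          Equiv.prod_comp (Equiv.swap 0 p) x
        have h2 : (∏ j : Fin (n+1), x (Equiv.swap 0 p j))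
            = x p * ∏ i : Fin n, y i := by
          rw [Fin.prod_univ_succ]; simp [hy]
        have h3 : ∏ i : Fin n, y i = (∏ j, x j) / x p := by
          rw [eq_div_iff (hx1 p), ← h1, h2]; ring
        rw [Finset.prod_inv_distrib, h3, Finset.prod_inv_distrib]
        field_simp
      calc ∑ e : Perm (Fin n), ∏ k : Fin (n+1),
            (∑ i ∈ Finset.Ici k, x (Equiv.Perm.decomposeFin.symm (p, e) i))⁻¹
          = ∑ e : Perm (Fin n), (∑ i, x i)⁻¹ *
              ∏ j : Fin n, (∑ i ∈ Finset.Ici j, y (e i))⁻¹ := by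
            refine Finset.sum_congr rfl fun e _ => ?_
            rw [Fin.prod_univ_succ]
            congr 1
            · congr 1
              rw [show (Finset.Ici (0 : Fin (n+1))) = Finset.univ from by ext a; simp [Fin.zero_le]]
              exact Equiv.sum_comp (Equiv.Perm.decomposeFin.symm (p, e)) x
            · refine Finset.prod_congr rfl fun j _ => ?_
              rw [hIci]
              congr 1
              refine Finset.sum_congr rfl fun i _ => ?_
              rw [Equiv.Perm.decomposeFin_symm_apply_succ]
        _ = (∑ i, x i)⁻¹ * (x p * ∏ i, (x i)⁻¹) := by
            rw [← Finset.mul_sum, ← Finset.sum_congr rfl fun e _ => rfl]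
            rw [IH y hy_sub, hyprod]
    rw [Finset.sum_congr rfl fun p _ => key p]
    rw [← Finset.mul_sum, ← Finset.sum_mul]
    field_simp

/-- If all partial sums `x (σ 1) + ⋯ + x (σ k)` are nonzero for every permutation `σ`,
then `∑_{σ ∈ S_m} ∏_k (x (σ 1) + ⋯ + x (σ k))⁻¹ = ∏_i (x i)⁻¹`. -/
theorem stmt0 (F : Type*) [Field F] (m : ℕ) (x : Fin m → F)
    (hx : ∀ (σ : Equiv.Perm (Fin m)) (k : Fin m), (∑ i ∈ Finset.Iic k, x (σ i)) ≠ 0) :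
    ∑ σ : Equiv.Perm (Fin m), ∏ k : Fin m, (∑ i ∈ Finset.Iic k, x (σ i))⁻¹
      = ∏ i : Fin m, (x i)⁻¹ := by
  classical
  -- every nonempty subset has nonzero sum
  have hsub : ∀ s : Finset (Fin m), s.Nonempty → ∑ i ∈ s, x i ≠ 0 := by
    intro s hs
    have hc : 1 ≤ s.card := Finset.one_le_card.mpr hs
    have hcm : s.card - 1 < m := by
      have := s.card_le_univ
      simp only [Finset.card_univ, Fintype.card_fin] at this
      omega
    set k : Fin m := ⟨s.card - 1, hcm⟩ with hk
    have hcard : Fintype.card {i // i ∈ Finset.Iic k} = Fintype.card {i // i ∈ s} := by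
      rw [Fintype.card_coe, Fintype.card_coe, Fin.card_Iic]
      simp [hk]; omega
    set e := Fintype.equivOfCardEq hcard with he
    set σ := e.extendSubtype with hσ
    have himg : (Finset.Iic k).image σ = s := by
      apply Finset.eq_of_subset_of_card_le
      · intro a ha
        rcases Finset.mem_image.mp ha with ⟨b, hb, rfl⟩
        exact e.extendSubtype_mem b hb
      · rw [Finset.card_image_of_injective _ σ.injective, Fin.card_Iic]
        simp [hk]; omega
    have : ∑ i ∈ Finset.Iic k, x (σ i) = ∑ j ∈ s, x j := by
      rw [← himg, Finset.sum_image (fun a _ b _ h => σ.injective h)]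
    rw [← this]
    exact hx σ k
  -- convert to the tail-sum form
  have hrev : ∑ σ : Equiv.Perm (Fin m), ∏ k : Fin m, (∑ i ∈ Finset.Iic k, x (σ i))⁻¹
      = ∑ σ : Equiv.Perm (Fin m), ∏ k : Fin m, (∑ i ∈ Finset.Ici k, x (σ i))⁻¹ := by
    rw [← Equiv.sum_comp (Equiv.mulRight (Fin.revPerm : Equiv.Perm (Fin m)))
      (fun σ => ∏ k : Fin m, (∑ i ∈ Finset.Iic k, x (σ i))⁻¹)]
    refine Finset.sum_congr rfl fun σ _ => ?_
    rw [← Equiv.prod_comp (Fin.revPerm : Equiv.Perm (Fin m))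
      (fun k => (∑ i ∈ Finset.Ici k, x (σ i))⁻¹)]
    refine Finset.prod_congr rfl fun k _ => ?_
    congr 1
    refine Finset.sum_nbij' (fun i => Fin.rev i) (fun i => Fin.rev i) ?_ ?_ ?_ ?_ ?_
    · intro a ha
      simp only [Finset.mem_Iic] at ha
      simp only [Finset.mem_Ici]
      exact Fin.rev_le_rev.mpr ha
    · intro a ha
      simp only [Finset.mem_Ici] at ha
      simp only [Finset.mem_Iic]
      simpa using Fin.rev_le_rev.mpr ha
    · intro a _; exact Fin.rev_rev a
    · intro a _; exact Fin.rev_rev a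
    · intro a _; simp
  rw [hrev]
  exact aux_tail F m x hsub
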